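/- arXiv:math/0606662 — 2 statements merged into one kernel-verified Lean document; each statement's English description precedes it below -/
import Mathlib

section
/- Let R be an irreducible root system with coweight lattice P, and let r : P → ℝ_{>0} be the homomorphism r(λ) = Π_{α∈R⁺} τ_α^{⟨λ,α⟩/2} where each τ_α > 0 and τ_α depends only on the W₀-orbit of α, with τ_α τ_{2α}² > 1 for all α ∈ R₂ (where τ_{2α} := 1 if 2α ∉ R). If λ, μ ∈ P with λ − μ ∈ Q⁺ (the ℕ-span of the positive coroots), then r(μ) ≤ r(λ), with equality if and only if μ = λ. -/
/-!
Write `r(λ) = exp (⟪λ, v⟫ / 2)` with `v = ∑_{α ∈ R⁺} log τ_α • α`; it suffices that `⟪β, v⟫ > 0`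
for every positive root `β`. In `∑_{α ∈ R⁺} log τ_α ⟪β, α⟫` the roots `α` with `s_β α ∈ R⁺` cancel
in pairs `α, s_β α` by `W₀`-invariance of `τ`. What is left is the sum over the inversion set
`N(s_β)`, on which `⟪β, α⟫ > 0`. Grouping each `α ∈ N(s_β) ∩ R₂` with `2α` makes it a sum of terms
`log (τ_α τ_{2α}²) ⟪β, α⟫ > 0`, and the sum is not empty because `β` or `β/2` lies in `N(s_β) ∩ R₂`.
-/

open RealInnerProductSpace
open scoped Classical

variable {E : Type*}

/-- The coroot `α^∨ = 2α/⟨α,α⟩` of a root `α`. -/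
noncomputable def coroot [NormedAddCommGroup E] [InnerProductSpace ℝ E] (α : E) : E :=
  (2 / ⟪α, α⟫) • α

/-- `g` is the orthogonal reflection in the hyperplane orthogonal to `α`. -/
def IsReflectionOf [NormedAddCommGroup E] [InnerProductSpace ℝ E]
    (g : E ≃ₗᵢ[ℝ] E) (α : E) : Prop :=
  ∀ x, g x = x - (2 * ⟪x, α⟫ / ⟪α, α⟫) • α

/-- The Weyl group `W₀`: the group generated by the reflections in the roots. -/
def weylGroup [NormedAddCommGroup E] [InnerProductSpace ℝ E] (R : Finset E) :
    Subgroup (E ≃ₗᵢ[ℝ] E) :=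
  Subgroup.closure {g | ∃ α ∈ R, IsReflectionOf g α}

/-- `R` is a (possibly non-reduced) root system spanning `E`. -/
structure IsRootSystem [NormedAddCommGroup E] [InnerProductSpace ℝ E] (R : Finset E) : Prop where
  nonzero : ∀ α ∈ R, α ≠ 0
  neg_mem : ∀ α ∈ R, -α ∈ R
  reflect_mem : ∀ α ∈ R, ∀ β ∈ R, β - (2 * ⟪β, α⟫ / ⟪α, α⟫) • α ∈ R
  cartan_int : ∀ α ∈ R, ∀ β ∈ R, ∃ k : ℤ, (k : ℝ) = 2 * ⟪β, α⟫ / ⟪α, α⟫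
  span_top : Submodule.span ℝ (R : Set E) = ⊤

/-- Irreducibility: `R` admits no partition into two orthogonal nonempty subsets. -/
def IsIrreducibleRS [NormedAddCommGroup E] [InnerProductSpace ℝ E] (R : Finset E) : Prop :=
  ∀ S₁ S₂ : Set E, (R : Set E) = S₁ ∪ S₂ →
    (∀ a ∈ S₁, ∀ b ∈ S₂, ⟪a, b⟫ = 0) → S₁ = ∅ ∨ S₂ = ∅

/-- `B` is a base of `R` with corresponding positive system `Rpos = R⁺`. -/
structure IsBaseOf [NormedAddCommGroup E] [InnerProductSpace ℝ E]
    (R Rpos B : Finset E) : Prop where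
  base_subset : B ⊆ Rpos
  pos_subset : Rpos ⊆ R
  pos_or_neg : ∀ α ∈ R, α ∈ Rpos ∨ -α ∈ Rpos
  not_both : ∀ α ∈ Rpos, -α ∉ Rpos
  indep : LinearIndependent ℝ (fun b : B => (b : E))
  pos_combo : ∀ β ∈ Rpos, ∃ c : E → ℝ, (∀ b, 0 ≤ c b) ∧ β = ∑ b ∈ B, c b • b

/-- `R₂ = {α ∈ R : α/2 ∉ R}`. -/
noncomputable def Rtwo [NormedAddCommGroup E] [InnerProductSpace ℝ E] (R : Finset E) :
    Finset E :=
  R.filter fun α => (2 : ℝ)⁻¹ • α ∉ R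

/-- The homomorphism `r(λ) = ∏_{α ∈ R⁺} τ_α^{⟨λ,α⟩/2}`. -/
noncomputable def rhom [NormedAddCommGroup E] [InnerProductSpace ℝ E]
    (Rpos : Finset E) (τ : E → ℝ) (lam : E) : ℝ :=
  ∏ α ∈ Rpos, τ α ^ (⟪lam, α⟫ / 2)

/-- Membership in the coweight lattice `P`: integral pairing with every simple root. -/
def inCoweightLattice [NormedAddCommGroup E] [InnerProductSpace ℝ E]
    (B : Finset E) (x : E) : Prop :=
  ∀ b ∈ B, ∃ k : ℤ, ⟪x, b⟫ = (k : ℝ)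

section RootSystem

variable [NormedAddCommGroup E] [InnerProductSpace ℝ E] {R Rpos B N : Finset E} {α β γ : E}

lemma IsBaseOf.mem_hull_of_mem_pos (hbase : IsBaseOf R Rpos B) (hα : α ∈ Rpos) :
    α ∈ PointedCone.hull ℝ (B : Set E) := by
  obtain ⟨c, hc, rfl⟩ := hbase.pos_combo α hα
  exact Submodule.sum_mem _ fun b hb =>
    PointedCone.smul_mem _ (hc b) (PointedCone.subset_hull hb)

lemma IsBaseOf.eq_zero_of_mem_hull_of_neg_mem_hull (hbase : IsBaseOf R Rpos B) {x : E}
    (hx : x ∈ PointedCone.hull ℝ (B : Set E)) (hnx : -x ∈ PointedCone.hull ℝ (B : Set E)) :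
    x = 0 := by
  obtain ⟨f, -, hf⟩ := Submodule.mem_span_finset.1 hx
  obtain ⟨g, -, hg⟩ := Submodule.mem_span_finset.1 hnx
  replace hf : ∑ b ∈ B, (f b : ℝ) • b = x := hf
  replace hg : ∑ b ∈ B, (g b : ℝ) • b = -x := hg
  have hsum : ∑ b ∈ B, ((f b : ℝ) + g b) • b = 0 := by
    simp only [add_smul, Finset.sum_add_distrib, hf, hg, add_neg_cancel]
  have hfg := linearIndepOn_finset_iff.1 (linearIndependent_set_coe_iff.1 hbase.indep) _ hsum
  rw [← hf]
  refine Finset.sum_eq_zero fun b hb => ?_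
  have hfb : (f b : ℝ) = 0 := le_antisymm (by linarith [hfg b hb, (g b).2]) (f b).2
  rw [hfb, zero_smul]

lemma IsBaseOf.mem_pos_of_mem_hull (hRS : IsRootSystem R) (hbase : IsBaseOf R Rpos B)
    (hγ : γ ∈ R) (hγB : γ ∈ PointedCone.hull ℝ (B : Set E)) : γ ∈ Rpos :=
  (hbase.pos_or_neg γ hγ).resolve_right fun hneg =>
    hRS.nonzero γ hγ
      (hbase.eq_zero_of_mem_hull_of_neg_mem_hull hγB (hbase.mem_hull_of_mem_pos hneg))

lemma IsBaseOf.smul_mem_pos (hRS : IsRootSystem R) (hbase : IsBaseOf R Rpos B)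
    (hα : α ∈ Rpos) {c : ℝ} (hc : 0 < c) (hcα : c • α ∈ R) : c • α ∈ Rpos :=
  hbase.mem_pos_of_mem_hull hRS hcα (PointedCone.smul_mem _ hc.le (hbase.mem_hull_of_mem_pos hα))

noncomputable abbrev rootReflection (β : E) : E ≃ₗᵢ[ℝ] E := (ℝ ∙ β)ᗮ.reflection

lemma rootReflection_apply (β x : E) :
    rootReflection β x = x - (2 * ⟪x, β⟫ / ⟪β, β⟫) • β := by
  rw [Submodule.reflection_apply, Submodule.starProjection_orthogonal_val,
    Submodule.starProjection_singleton, real_inner_comm, real_inner_self_eq_norm_sq]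
  simp only [RCLike.ofReal_real_eq_id, id_eq]
  rw [mul_div_assoc]
  module

lemma inner_rootReflection (β x : E) : ⟪β, rootReflection β x⟫ = -⟪β, x⟫ := by
  rw [← (rootReflection β).inner_map_map, Submodule.reflection_reflection,
    Submodule.reflection_orthogonalComplement_singleton_eq_neg, inner_neg_left]

lemma rootReflection_mem_weylGroup (hβ : β ∈ R) :
    rootReflection β ∈ weylGroup R :=
  Subgroup.subset_closure ⟨β, hβ, rootReflection_apply β⟩

lemma IsRootSystem.rootReflection_mem (hRS : IsRootSystem R)
    (hβ : β ∈ R) (hα : α ∈ R) : rootReflection β α ∈ R := by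
  rw [rootReflection_apply]
  exact hRS.reflect_mem β hβ α hα

lemma IsRootSystem.inv_two_smul_mem_Rtwo (hRS : IsRootSystem R)
    (hα : α ∈ R) (hhalf : (2 : ℝ)⁻¹ • α ∈ R) : (2 : ℝ)⁻¹ • α ∈ Rtwo R := by
  refine Finset.mem_filter.2 ⟨hhalf, fun hquarter => ?_⟩
  obtain ⟨k, hk⟩ := hRS.cartan_int α hα _ hquarter
  have hαα : ⟪α, α⟫ ≠ 0 := inner_self_ne_zero.2 (hRS.nonzero α hα)
  have hk' : ((2 * k : ℤ) : ℝ) = 1 := by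
    rw [Int.cast_mul, hk, smul_smul, real_inner_smul_left]
    field_simp
    norm_num
  have : 2 * k = 1 := by exact_mod_cast hk'
  omega

lemma IsRootSystem.inv_two_smul_mem_inter_Rtwo (hRS : IsRootSystem R)
    (hNR : N ⊆ R) (hN : ∀ α ∈ N, ∀ c : ℝ, 0 < c → c • α ∈ R → c • α ∈ N)
    (hαN : α ∈ N) (hαR₂ : α ∉ Rtwo R) : (2 : ℝ)⁻¹ • α ∈ N ∩ Rtwo R := by
  have hhalf : (2 : ℝ)⁻¹ • α ∈ R := by
    by_contra h
    exact hαR₂ (Finset.mem_filter.2 ⟨hNR hαN, h⟩)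
  exact Finset.mem_inter.2
    ⟨hN α hαN _ (by norm_num) hhalf, hRS.inv_two_smul_mem_Rtwo (hNR hαN) hhalf⟩

lemma IsRootSystem.inter_Rtwo_nonempty (hRS : IsRootSystem R) (hNR : N ⊆ R)
    (hN : ∀ α ∈ N, ∀ c : ℝ, 0 < c → c • α ∈ R → c • α ∈ N) (hne : N.Nonempty) :
    (N ∩ Rtwo R).Nonempty := by
  obtain ⟨α, hα⟩ := hne
  by_cases hαR₂ : α ∈ Rtwo R
  · exact ⟨α, Finset.mem_inter.2 ⟨hα, hαR₂⟩⟩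
  · exact ⟨_, hRS.inv_two_smul_mem_inter_Rtwo hNR hN hα hαR₂⟩

lemma IsRootSystem.sum_eq_sum_inter_Rtwo (hRS : IsRootSystem R) (hNR : N ⊆ R)
    (hN : ∀ α ∈ N, ∀ c : ℝ, 0 < c → c • α ∈ R → c • α ∈ N) (φ : E → ℝ) :
    ∑ α ∈ N, φ α =
      ∑ α ∈ N ∩ Rtwo R, (φ α + if (2 : ℝ) • α ∈ R then φ ((2 : ℝ) • α) else 0) := by
  rw [Finset.sum_add_distrib, ← Finset.sum_filter,
    ← Finset.sum_filter_add_sum_filter_not N (· ∈ Rtwo R), Finset.filter_mem_eq_inter]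
  congr 1
  refine Finset.sum_nbij' (fun α => (2 : ℝ)⁻¹ • α) (fun α => (2 : ℝ) • α) ?_ ?_ ?_ ?_ ?_
  · intro α hα
    obtain ⟨hαN, hαR₂⟩ := Finset.mem_filter.1 hα
    refine Finset.mem_filter.2 ⟨hRS.inv_two_smul_mem_inter_Rtwo hNR hN hαN hαR₂, ?_⟩
    rw [smul_inv_smul₀ two_ne_zero]
    exact hNR hαN
  · intro γ hγ
    obtain ⟨hγ, h2γ⟩ := Finset.mem_filter.1 hγ
    obtain ⟨hγN, -⟩ := Finset.mem_inter.1 hγ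
    refine Finset.mem_filter.2 ⟨hN γ hγN 2 two_pos h2γ, fun h => ?_⟩
    exact (Finset.mem_filter.1 h).2 (by rw [inv_smul_smul₀ two_ne_zero]; exact hNR hγN)
  · intro α _
    exact smul_inv_smul₀ two_ne_zero α
  · intro γ _
    exact inv_smul_smul₀ two_ne_zero γ
  · intro α _
    rw [smul_inv_smul₀ two_ne_zero]

noncomputable def inversionSet (Rpos : Finset E) (β : E) : Finset E :=
  Rpos.filter fun α => rootReflection β α ∉ Rpos

lemma inner_pos_of_mem_inversionSet (hRS : IsRootSystem R) (hbase : IsBaseOf R Rpos B)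
    (hβ : β ∈ Rpos) (hα : α ∈ inversionSet Rpos β) : 0 < ⟪β, α⟫ := by
  obtain ⟨hαpos, hsα⟩ := Finset.mem_filter.1 hα
  by_contra! hle
  refine hsα (hbase.mem_pos_of_mem_hull hRS
    (hRS.rootReflection_mem (hbase.pos_subset hβ) (hbase.pos_subset hαpos)) ?_)
  rw [rootReflection_apply, sub_eq_add_neg, ← neg_smul]
  refine add_mem (hbase.mem_hull_of_mem_pos hαpos)
    (PointedCone.smul_mem _ ?_ (hbase.mem_hull_of_mem_pos hβ))
  rw [neg_nonneg, real_inner_comm]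
  exact div_nonpos_of_nonpos_of_nonneg (by linarith) real_inner_self_nonneg

lemma smul_mem_inversionSet (hRS : IsRootSystem R) (hbase : IsBaseOf R Rpos B)
    (hβ : β ∈ Rpos) (hα : α ∈ inversionSet Rpos β) {c : ℝ} (hc : 0 < c) (hcα : c • α ∈ R) :
    c • α ∈ inversionSet Rpos β := by
  obtain ⟨hαpos, hsα⟩ := Finset.mem_filter.1 hα
  refine Finset.mem_filter.2 ⟨hbase.smul_mem_pos hRS hαpos hc hcα, fun hscα => ?_⟩
  rw [map_smul] at hscα
  have hneg : -rootReflection β α ∈ Rpos :=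
    (hbase.pos_or_neg _ (hRS.rootReflection_mem (hbase.pos_subset hβ)
      (hbase.pos_subset hαpos))).resolve_left hsα
  have hcneg : c • -rootReflection β α ∈ Rpos := by
    refine hbase.smul_mem_pos hRS hneg hc ?_
    rw [smul_neg]
    exact hRS.neg_mem _ (hbase.pos_subset hscα)
  rw [smul_neg] at hcneg
  exact hbase.not_both _ hscα hcneg

lemma mem_inversionSet_self (hbase : IsBaseOf R Rpos B) (hβ : β ∈ Rpos) :
    β ∈ inversionSet Rpos β := by
  refine Finset.mem_filter.2 ⟨hβ, ?_⟩
  rw [Submodule.reflection_orthogonalComplement_singleton_eq_neg]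
  exact hbase.not_both β hβ

lemma sum_filter_rootReflection_mem_eq_zero (hbase : IsBaseOf R Rpos B) {τ : E → ℝ}
    (hτinv : ∀ w ∈ weylGroup R, ∀ α ∈ R, τ (w α) = τ α) (hβ : β ∈ R) :
    ∑ α ∈ Rpos.filter (fun α => rootReflection β α ∈ Rpos), Real.log (τ α) * ⟪β, α⟫ = 0 := by
  refine Finset.sum_involution (fun α _ => rootReflection β α) ?_ ?_ ?_ ?_
  · intro α hα
    rw [hτinv _ (rootReflection_mem_weylGroup hβ) α
      (hbase.pos_subset (Finset.mem_filter.1 hα).1), inner_rootReflection]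
    ring
  · intro α _ hne hfix
    refine hne ?_
    have h0 : ⟪β, α⟫ = 0 := by
      have := inner_rootReflection β α
      rw [hfix] at this
      linarith
    rw [h0, mul_zero]
  · intro α hα
    obtain ⟨hαpos, hsα⟩ := Finset.mem_filter.1 hα
    exact Finset.mem_filter.2 ⟨hsα, by rwa [Submodule.reflection_reflection]⟩
  · intro α _
    exact Submodule.reflection_reflection _ α

noncomputable def logWeight (Rpos : Finset E) (τ : E → ℝ) : E :=
  ∑ α ∈ Rpos, Real.log (τ α) • α

lemma rhom_eq_exp_inner_logWeight {τ : E → ℝ} (hτ : ∀ α ∈ Rpos, 0 < τ α) (x : E) :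
    rhom Rpos τ x = Real.exp (⟪x, logWeight Rpos τ⟫ / 2) := by
  rw [rhom, logWeight, inner_sum, Finset.sum_div, Real.exp_sum]
  refine Finset.prod_congr rfl fun α hα => ?_
  rw [Real.rpow_def_of_pos (hτ α hα), real_inner_smul_right]
  ring_nf

lemma inner_logWeight_pos (hRS : IsRootSystem R) (hbase : IsBaseOf R Rpos B) {τ : E → ℝ}
    (hτpos : ∀ α ∈ R, 0 < τ α)
    (hτinv : ∀ w ∈ weylGroup R, ∀ α ∈ R, τ (w α) = τ α)
    (hτgt : ∀ α ∈ Rtwo R, 1 < τ α * (if (2 : ℝ) • α ∈ R then τ ((2 : ℝ) • α) else 1) ^ 2)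
    (hβ : β ∈ Rpos) : 0 < ⟪β, logWeight Rpos τ⟫ := by
  have hNR : inversionSet Rpos β ⊆ R := (Finset.filter_subset _ _).trans hbase.pos_subset
  have hN : ∀ α ∈ inversionSet Rpos β, ∀ c : ℝ, 0 < c → c • α ∈ R →
      c • α ∈ inversionSet Rpos β := fun α hα _ hc hcα =>
    smul_mem_inversionSet hRS hbase hβ hα hc hcα
  simp only [logWeight, inner_sum, real_inner_smul_right]
  rw [← Finset.sum_filter_add_sum_filter_not Rpos (fun α => rootReflection β α ∈ Rpos),
    sum_filter_rootReflection_mem_eq_zero hbase hτinv (hbase.pos_subset hβ), zero_add]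
  change 0 < ∑ α ∈ inversionSet Rpos β, _
  rw [hRS.sum_eq_sum_inter_Rtwo hNR hN]
  refine Finset.sum_pos (fun α hα => ?_)
    (hRS.inter_Rtwo_nonempty hNR hN ⟨β, mem_inversionSet_self hbase hβ⟩)
  obtain ⟨hαN, hαR₂⟩ := Finset.mem_inter.1 hα
  have hαR := hNR hαN
  have hpair : Real.log (τ α) * ⟪β, α⟫ +
      (if (2 : ℝ) • α ∈ R then Real.log (τ ((2 : ℝ) • α)) * ⟪β, (2 : ℝ) • α⟫ else 0) =
      Real.log (τ α * (if (2 : ℝ) • α ∈ R then τ ((2 : ℝ) • α) else 1) ^ 2) * ⟪β, α⟫ := by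
    split_ifs with h2α
    · rw [Real.log_mul (hτpos α hαR).ne' (pow_pos (hτpos _ h2α) 2).ne', Real.log_pow,
        real_inner_smul_right]
      push_cast
      ring
    · simp
  rw [hpair]
  exact mul_pos (Real.log_pos (hτgt α hαR₂)) (inner_pos_of_mem_inversionSet hRS hbase hβ hαN)

lemma eq_zero_or_inner_pos_of_eq_sum_natCast_smul {ι : Type*} {s : Finset ι} {w : ι → E}
    {v x : E} (hw : ∀ i ∈ s, 0 < ⟪w i, v⟫) (c : ι → ℕ) (hx : x = ∑ i ∈ s, (c i : ℝ) • w i) :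
    x = 0 ∨ 0 < ⟪x, v⟫ := by
  by_cases hc : ∀ i ∈ s, c i = 0
  · left
    rw [hx]
    exact Finset.sum_eq_zero fun i hi => by rw [hc i hi, Nat.cast_zero, zero_smul]
  · right
    push Not at hc
    obtain ⟨i, hi, hci⟩ := hc
    rw [hx, sum_inner]
    simp only [real_inner_smul_left]
    exact Finset.sum_pos' (fun j hj => mul_nonneg (Nat.cast_nonneg _) (hw j hj).le)
      ⟨i, hi, mul_pos (Nat.cast_pos.2 (Nat.pos_of_ne_zero hci)) (hw i hi)⟩

end RootSystem

theorem stmt4_general [NormedAddCommGroup E] [InnerProductSpace ℝ E]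
    (R Rpos B : Finset E) (hRS : IsRootSystem R)
    (hbase : IsBaseOf R Rpos B) (τ : E → ℝ)
    (hτpos : ∀ α ∈ R, 0 < τ α)
    (hτinv : ∀ w ∈ weylGroup R, ∀ α ∈ R, τ (w α) = τ α)
    (hτgt : ∀ α ∈ Rtwo R, 1 < τ α * (if (2 : ℝ) • α ∈ R then τ ((2 : ℝ) • α) else 1) ^ 2)
    (lam mu : E)
    (hdiff : ∃ c : E → ℕ, lam - mu = ∑ α ∈ Rpos, (c α : ℝ) • coroot α) :
    rhom Rpos τ mu ≤ rhom Rpos τ lam ∧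
    (rhom Rpos τ mu = rhom Rpos τ lam ↔ mu = lam) := by
  obtain ⟨c, hc⟩ := hdiff
  have hcoroot : ∀ α ∈ Rpos, 0 < ⟪coroot α, logWeight Rpos τ⟫ := fun α hα => by
    rw [coroot, real_inner_smul_left]
    have hα0 := hRS.nonzero α (hbase.pos_subset hα)
    exact mul_pos (div_pos two_pos (real_inner_self_pos.2 hα0))
      (inner_logWeight_pos hRS hbase hτpos hτinv hτgt hα)
  rcases eq_zero_or_inner_pos_of_eq_sum_natCast_smul hcoroot c hc with h | h
  · rw [sub_eq_zero.1 h]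
    exact ⟨le_rfl, iff_of_true rfl rfl⟩
  · have hlt : rhom Rpos τ mu < rhom Rpos τ lam := by
      simp only [rhom_eq_exp_inner_logWeight fun α hα => hτpos α (hbase.pos_subset hα)]
      rw [inner_sub_left] at h
      exact Real.exp_lt_exp.2 (by linarith)
    refine ⟨hlt.le, iff_of_false hlt.ne fun hmu => ?_⟩
    rw [hmu, sub_self, inner_zero_left] at h
    exact h.false

/-- If `λ - μ` lies in `Q⁺` (the `ℕ`-span of the positive coroots) then `r(μ) ≤ r(λ)`,
with equality iff `μ = λ`. -/
theorem stmt4 [NormedAddCommGroup E] [InnerProductSpace ℝ E]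
    (R Rpos B : Finset E) (hRS : IsRootSystem R) (hirr : IsIrreducibleRS R)
    (hbase : IsBaseOf R Rpos B) (τ : E → ℝ)
    (hτpos : ∀ α ∈ R, 0 < τ α)
    (hτinv : ∀ w ∈ weylGroup R, ∀ α ∈ R, τ (w α) = τ α)
    (hτgt : ∀ α ∈ Rtwo R, 1 < τ α * (if (2 : ℝ) • α ∈ R then τ ((2 : ℝ) • α) else 1) ^ 2)
    (lam mu : E) (hlam : inCoweightLattice B lam) (hmu : inCoweightLattice B mu)
    (hdiff : ∃ c : E → ℕ, lam - mu = ∑ α ∈ Rpos, (c α : ℝ) • coroot α) :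
    rhom Rpos τ mu ≤ rhom Rpos τ lam ∧
    (rhom Rpos τ mu = rhom Rpos τ lam ↔ mu = lam) :=
  stmt4_general R Rpos B hRS hbase τ hτpos hτinv hτgt lam mu hdiff
end

section
/- Let R be an irreducible root system with highest root α̃ and Weyl group W₀. If at most two root lengths occur and R is irreducible, then for any root β with |β| ≠ |α̃| there exists w ∈ W₀ with ⟨wα̃, β⟩ ≠ 0. Consequently ⟨wα̃^∨, β⟩ = ±1, and β^∨ = ±(s_β(wα̃^∨) − wα̃^∨) lies in the ℤ-span of W₀α̃^∨. -/
open RealInnerProductSpace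
open scoped Classical

variable {E : Type*}

/-!
If `⟪w α̃, β⟫ = 0` for every `w ∈ W₀`, the roots orthogonal to the whole orbit `W₀ α̃` and the
remaining roots would split `R` orthogonally; so some `w` has `⟪w α̃, β⟫ ≠ 0`.

The highest root is long. Maximizing a height functional (equal to `1` on the base) over the
orbit of `β` gives a dominant `γ = w' β`, since a simple reflection would raise the height of a
non-dominant root. Then `α̃ - γ` is a nonnegative combination of simple roots, and pairing it with
the dominant vectors `α̃` and `γ` gives `‖γ‖² ≤ ⟪α̃, γ⟫ ≤ ‖α̃‖²`.

Hence `‖β‖ < ‖w α̃‖`, and Cauchy–Schwarz bounds the integer `k = ⟪(w α̃)^∨, β⟫` by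
`k² ‖α̃‖² ≤ 4 ‖β‖² < 4 ‖α̃‖²`, so `k = ±1`. Finally `x - s_β x = ⟪x, β⟫ • β^∨` for
`x = w α̃^∨`, and both `x` and `s_β x` lie in `W₀ α̃^∨`.
-/

section Reflection
variable [NormedAddCommGroup E] [InnerProductSpace ℝ E]

lemma reflection_orthogonal_singleton_apply (α x : E) :
    (ℝ ∙ α)ᗮ.reflection x = x - (2 * ⟪x, α⟫ / ⟪α, α⟫) • α := by
  rw [Submodule.reflection_orthogonal_apply, Submodule.reflection_singleton_apply,
    real_inner_self_eq_norm_sq, real_inner_comm, RCLike.ofReal_real_eq_id, id]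
  module

lemma isReflectionOf_reflection (α : E) : IsReflectionOf (ℝ ∙ α)ᗮ.reflection α :=
  reflection_orthogonal_singleton_apply α

lemma reflection_mem_weylGroup {R : Finset E} {α : E} (hα : α ∈ R) :
    (ℝ ∙ α)ᗮ.reflection ∈ weylGroup R :=
  Subgroup.subset_closure ⟨α, hα, isReflectionOf_reflection α⟩

lemma sub_reflection_eq_inner_smul_coroot (x β : E) :
    x - (ℝ ∙ β)ᗮ.reflection x = ⟪x, β⟫ • coroot β := by
  rw [reflection_orthogonal_singleton_apply, sub_sub_cancel, coroot, smul_smul]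
  ring_nf

lemma LinearIsometryEquiv.map_coroot (g : E ≃ₗᵢ[ℝ] E) (α : E) : g (coroot α) = coroot (g α) := by
  rw [coroot, coroot, map_smul, g.inner_map_map]

end Reflection

section WeylGroup
variable [NormedAddCommGroup E] [InnerProductSpace ℝ E] {R : Finset E}

lemma IsRootSystem.mapsTo_of_mem_weylGroup (hRS : IsRootSystem R) {g : E ≃ₗᵢ[ℝ] E}
    (hg : g ∈ weylGroup R) : Set.MapsTo g R R := by
  induction hg using Subgroup.closure_induction with
  | mem g hg =>
    obtain ⟨α, hα, hrefl⟩ := hg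
    intro β hβ
    rw [hrefl β]
    exact hRS.reflect_mem α hα β hβ
  | one => exact Set.mapsTo_id _
  | mul g h _ _ hg hh => exact hg.comp hh
  | inv g _ hg =>
    have hbij := (R.finite_toSet.injOn_iff_bijOn_of_mapsTo hg).mp g.injective.injOn
    intro β hβ
    obtain ⟨α, hα, rfl⟩ := hbij.surjOn hβ
    simpa using hα

lemma IsRootSystem.exists_mem_weylGroup_inner_ne_zero (hRS : IsRootSystem R)
    (hirr : IsIrreducibleRS R) {α β : E} (hα : α ∈ R) (hβ : β ∈ R) :
    ∃ w ∈ weylGroup R, ⟪w α, β⟫ ≠ 0 := by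
  by_contra! hcon
  let S₁ : Set E := {γ | γ ∈ R ∧ ∀ w ∈ weylGroup R, ⟪w α, γ⟫ = 0}
  let S₂ : Set E := {γ | γ ∈ R ∧ ∃ w ∈ weylGroup R, ⟪w α, γ⟫ ≠ 0}
  have hunion : (R : Set E) = S₁ ∪ S₂ := by
    ext γ
    refine ⟨fun hγ => ?_, by rintro (⟨hγ, -⟩ | ⟨hγ, -⟩) <;> exact hγ⟩
    by_cases h : ∀ w ∈ weylGroup R, ⟪w α, γ⟫ = 0
    · exact .inl ⟨hγ, h⟩
    · push Not at h
      exact .inr ⟨hγ, h⟩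
  have horth : ∀ a ∈ S₁, ∀ b ∈ S₂, ⟪a, b⟫ = 0 := by
    rintro a ⟨-, ha⟩ b ⟨hbR, w, hw, hb⟩
    have hbb : ⟪b, b⟫ ≠ 0 := inner_self_ne_zero.mpr (hRS.nonzero b hbR)
    have h := ha _ (mul_mem (reflection_mem_weylGroup hbR) hw)
    rw [LinearIsometryEquiv.coe_mul, Function.comp_apply, reflection_orthogonal_singleton_apply,
      inner_sub_left, real_inner_smul_left, ha w hw, real_inner_comm a b,
      zero_sub, neg_eq_zero] at h
    have : 2 * ⟪w α, b⟫ / ⟪b, b⟫ ≠ 0 := div_ne_zero (mul_ne_zero two_ne_zero hb) hbb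
    exact (mul_eq_zero.mp h).resolve_left this
  rcases hirr S₁ S₂ hunion horth with h | h
  · exact (Set.eq_empty_iff_forall_notMem.mp h) β ⟨hβ, hcon⟩
  · refine (Set.eq_empty_iff_forall_notMem.mp h) α ⟨hα, 1, one_mem _, ?_⟩
    exact inner_self_ne_zero.mpr (hRS.nonzero α hα)

end WeylGroup

lemma exists_linearMap_eq_one_of_linearIndependent {K V ι : Type*} [Field K] [AddCommGroup V]
    [Module K V] {v : ι → V} (hv : LinearIndependent K v) :
    ∃ f : V →ₗ[K] K, ∀ i, f (v i) = 1 := by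
  obtain ⟨f, hf⟩ := (Module.Basis.span hv).sumCoords.exists_extend
  refine ⟨f, fun i => ?_⟩
  simpa using congr($hf (Module.Basis.span hv i))

section HighestRoot
variable [NormedAddCommGroup E] [InnerProductSpace ℝ E]

def IsDominant (B : Finset E) (x : E) : Prop :=
  ∀ b ∈ B, 0 ≤ ⟪x, b⟫

lemma lt_apply_reflection_of_inner_neg (f : E →ₗ[ℝ] ℝ) {b x : E} (hfb : 0 < f b)
    (h : ⟪x, b⟫ < 0) : f x < f ((ℝ ∙ b)ᗮ.reflection x) := by
  have hb : 0 < ⟪b, b⟫ := real_inner_self_pos.mpr (by rintro rfl; simp at h)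
  have hcoeff : 2 * ⟪x, b⟫ / ⟪b, b⟫ < 0 := div_neg_of_neg_of_pos (by linarith) hb
  rw [reflection_orthogonal_singleton_apply, map_sub, map_smul, smul_eq_mul]
  nlinarith

lemma IsDominant.inner_sum_smul_nonneg {B : Finset E} {x : E} (hx : IsDominant B x)
    {c : E → ℝ} (hc : ∀ b, 0 ≤ c b) : 0 ≤ ⟪∑ b ∈ B, c b • b, x⟫ := by
  rw [sum_inner]
  refine Finset.sum_nonneg fun b hb => ?_
  rw [real_inner_smul_left, real_inner_comm]
  exact mul_nonneg (hc b) (hx b hb)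

variable {R Rpos B : Finset E}

lemma IsRootSystem.isDominant_of_highest (hRS : IsRootSystem R) (hbase : IsBaseOf R Rpos B)
    {αt : E} (hαt : αt ∈ R)
    (hhigh : ∀ β ∈ R, ∃ c : E → ℝ, (∀ b, 0 ≤ c b) ∧ αt - β = ∑ b ∈ B, c b • b) :
    IsDominant B αt := by
  obtain ⟨f, hf⟩ := exists_linearMap_eq_one_of_linearIndependent hbase.indep
  intro b hb
  by_contra! hneg
  have hbW := reflection_mem_weylGroup (hbase.pos_subset (hbase.base_subset hb))
  obtain ⟨c, hc, hrep⟩ := hhigh _ (hRS.mapsTo_of_mem_weylGroup hbW hαt)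
  have hlt := lt_apply_reflection_of_inner_neg f (by simp [hf ⟨b, hb⟩]) hneg
  have hge : 0 ≤ f (αt - (ℝ ∙ b)ᗮ.reflection αt) := by
    rw [hrep, map_sum]
    refine Finset.sum_nonneg fun b' hb' => ?_
    simpa [hf ⟨b', hb'⟩] using hc b'
  rw [map_sub] at hge
  linarith

lemma IsRootSystem.exists_isDominant_mem_orbit (hRS : IsRootSystem R) (hbase : IsBaseOf R Rpos B)
    {β : E} (hβ : β ∈ R) : ∃ w ∈ weylGroup R, IsDominant B (w β) := by
  obtain ⟨f, hf⟩ := exists_linearMap_eq_one_of_linearIndependent hbase.indep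
  let O := R.filter fun x => ∃ w ∈ weylGroup R, w β = x
  obtain ⟨γ, hγO, hmax⟩ :=
    O.exists_max_image f ⟨β, Finset.mem_filter.mpr ⟨hβ, 1, one_mem _, rfl⟩⟩
  obtain ⟨-, w, hw, rfl⟩ := Finset.mem_filter.mp hγO
  refine ⟨w, hw, fun b hb => ?_⟩
  by_contra! hneg
  have hbw := mul_mem (reflection_mem_weylGroup (hbase.pos_subset (hbase.base_subset hb))) hw
  have hmem : (ℝ ∙ b)ᗮ.reflection (w β) ∈ O :=
    Finset.mem_filter.mpr ⟨hRS.mapsTo_of_mem_weylGroup hbw hβ, _, hbw, rfl⟩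
  exact (hmax _ hmem).not_gt (lt_apply_reflection_of_inner_neg f (by simp [hf ⟨b, hb⟩]) hneg)

lemma IsRootSystem.norm_le_norm_of_highest (hRS : IsRootSystem R) (hbase : IsBaseOf R Rpos B)
    {αt : E} (hαt : αt ∈ R)
    (hhigh : ∀ β ∈ R, ∃ c : E → ℝ, (∀ b, 0 ≤ c b) ∧ αt - β = ∑ b ∈ B, c b • b)
    {β : E} (hβ : β ∈ R) : ‖β‖ ≤ ‖αt‖ := by
  obtain ⟨w, hw, hdom⟩ := hRS.exists_isDominant_mem_orbit hbase hβ
  obtain ⟨c, hc, hrep⟩ := hhigh (w β) (hRS.mapsTo_of_mem_weylGroup hw hβ)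
  have h₁ := (hRS.isDominant_of_highest hbase hαt hhigh).inner_sum_smul_nonneg hc
  have h₂ := hdom.inner_sum_smul_nonneg hc
  rw [← hrep, inner_sub_left] at h₁ h₂
  rw [← w.norm_map β, ← sq_le_sq₀ (norm_nonneg _) (norm_nonneg _),
    ← real_inner_self_eq_norm_sq, ← real_inner_self_eq_norm_sq]
  linarith [real_inner_comm (w β) αt]

end HighestRoot

lemma IsRootSystem.inner_coroot_eq_one_or_neg_one [NormedAddCommGroup E] [InnerProductSpace ℝ E]
    {R : Finset E} (hRS : IsRootSystem R) {α β : E} (hα : α ∈ R) (hβ : β ∈ R)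
    (hlt : ‖β‖ < ‖α‖) (hne : ⟪α, β⟫ ≠ 0) : ⟪coroot α, β⟫ = 1 ∨ ⟪coroot α, β⟫ = -1 := by
  obtain ⟨k, hk⟩ := hRS.cartan_int α hα β hβ
  have hpair : ⟪coroot α, β⟫ = k := by
    rw [hk, coroot, real_inner_smul_left, real_inner_comm β α]
    ring
  have hαα : 0 < ⟪α, α⟫ := real_inner_self_pos.mpr (hRS.nonzero α hα)
  have hββ : ⟪β, β⟫ < ⟪α, α⟫ := by
    rw [real_inner_self_eq_norm_sq, real_inner_self_eq_norm_sq]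
    gcongr
  have hkα : (k : ℝ) * ⟪α, α⟫ = 2 * ⟪α, β⟫ := by
    rw [hk, real_inner_comm]
    field_simp
  have hk2 : (k : ℝ) ^ 2 < 4 := by
    refine lt_of_mul_lt_mul_right ?_ (sq_nonneg ⟪α, α⟫)
    calc (k : ℝ) ^ 2 * ⟪α, α⟫ ^ 2 = 4 * (⟪α, β⟫ * ⟪α, β⟫) := by rw [← mul_pow, hkα]; ring
      _ ≤ 4 * (⟪α, α⟫ * ⟪β, β⟫) := by linarith [real_inner_mul_inner_self_le α β]
      _ < 4 * ⟪α, α⟫ ^ 2 := by rw [sq]; gcongr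
  have hk0 : k ≠ 0 := by
    rintro rfl
    exact hne (by simpa using hkα.symm)
  have hk_bound : -2 < k ∧ k < 2 := by
    have : k ^ 2 < 4 := by exact_mod_cast hk2
    constructor <;> nlinarith
  rw [hpair]
  rcases (by omega : k = 1 ∨ k = -1) with rfl | rfl <;> norm_num

theorem stmt15_general [NormedAddCommGroup E] [InnerProductSpace ℝ E]
    (R Rpos B : Finset E) (hRS : IsRootSystem R) (hirr : IsIrreducibleRS R)
    (hbase : IsBaseOf R Rpos B) (αt : E) (hαt : αt ∈ R)
    (hhigh : ∀ β ∈ R, ∃ c : E → ℝ, (∀ b, 0 ≤ c b) ∧ αt - β = ∑ b ∈ B, c b • b)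
    (β : E) (hβ : β ∈ R) (hlen : ‖β‖ ≠ ‖αt‖) :
    ∃ w ∈ weylGroup R, ⟪w αt, β⟫ ≠ 0 ∧
      (⟪w (coroot αt), β⟫ = 1 ∨ ⟪w (coroot αt), β⟫ = -1) ∧
      coroot β ∈ Submodule.span ℤ
        ((fun g : E ≃ₗᵢ[ℝ] E => g (coroot αt)) '' (weylGroup R : Set (E ≃ₗᵢ[ℝ] E))) := by
  obtain ⟨w, hw, hne⟩ := hRS.exists_mem_weylGroup_inner_ne_zero hirr hαt hβ
  have hlt : ‖β‖ < ‖w αt‖ :=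
    w.norm_map αt ▸ (hRS.norm_le_norm_of_highest hbase hαt hhigh hβ).lt_of_ne hlen
  have hpm := hRS.inner_coroot_eq_one_or_neg_one (hRS.mapsTo_of_mem_weylGroup hw hαt) hβ hlt hne
  rw [← w.map_coroot] at hpm
  refine ⟨w, hw, hne, hpm, ?_⟩
  have horbit : ∀ g ∈ weylGroup R, g (coroot αt) ∈
      Submodule.span ℤ ((fun g : E ≃ₗᵢ[ℝ] E => g (coroot αt)) '' weylGroup R) :=
    fun g hg => Submodule.subset_span ⟨g, hg, rfl⟩
  set x := w (coroot αt)
  have hx := horbit w hw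
  have hsx := horbit _ (mul_mem (reflection_mem_weylGroup hβ) hw)
  have hdiff := sub_reflection_eq_inner_smul_coroot x β
  rcases hpm with h | h
  · rw [h, one_smul] at hdiff
    exact hdiff ▸ sub_mem hx hsx
  · rw [h, neg_one_smul, ← neg_eq_iff_eq_neg, neg_sub] at hdiff
    exact hdiff ▸ sub_mem hsx hx

/-- If at most two root lengths occur in the irreducible root system `R` with highest
root `α̃`, then for a root `β` with `‖β‖ ≠ ‖α̃‖` there is `w ∈ W₀` with `⟨wα̃, β⟩ ≠ 0`;
for such `w`, `⟨wα̃^∨, β⟩ = ±1`, and `β^∨` lies in the `ℤ`-span of `W₀ α̃^∨`. -/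
theorem stmt15 [NormedAddCommGroup E] [InnerProductSpace ℝ E]
    (R Rpos B : Finset E) (hRS : IsRootSystem R) (hirr : IsIrreducibleRS R)
    (hbase : IsBaseOf R Rpos B) (αt : E) (hαt : αt ∈ R)
    (hhigh : ∀ β ∈ R, ∃ c : E → ℝ, (∀ b, 0 ≤ c b) ∧ αt - β = ∑ b ∈ B, c b • b)
    (htwo : ∃ l₁ l₂ : ℝ, ∀ α ∈ R, ‖α‖ = l₁ ∨ ‖α‖ = l₂)
    (β : E) (hβ : β ∈ R) (hlen : ‖β‖ ≠ ‖αt‖) :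
    ∃ w ∈ weylGroup R, ⟪w αt, β⟫ ≠ 0 ∧
      (⟪w (coroot αt), β⟫ = 1 ∨ ⟪w (coroot αt), β⟫ = -1) ∧
      coroot β ∈ Submodule.span ℤ
        ((fun g : E ≃ₗᵢ[ℝ] E => g (coroot αt)) '' (weylGroup R : Set (E ≃ₗᵢ[ℝ] E))) :=
  stmt15_general R Rpos B hRS hirr hbase αt hαt hhigh β hβ hlen
end
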